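/- Let a and b be unit vectors in a complex Hilbert space H, and let P_a and P_b be the orthogonal projections onto the one-dimensional subspaces spanned by a and b respectively (P_a x = ⟨x, a⟩a, P_b x = ⟨x, b⟩b). Then ‖P_a − P_b‖ = √(1 − |⟨a, b⟩|²). -/

import Mathlib

/-! Write `T = P_a - P_b` and `c = ⟪a, b⟫`. The lower bound comes from `T a = a - ⟪b, a⟫ b`, whose
squared norm is `1 - |c|²`. For the upper bound, `‖T x‖² = (1 - |c|²) |⟪a, x⟫|² + |⟪f, x⟫|²` with
`f = b - c a`; since `f ⊥ a` and `‖f‖² = 1 - |c|²`, Cauchy–Schwarz applied to `⟪f, x - ⟪a, x⟫ a⟫`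
bounds the last term by `(1 - |c|²) (‖x‖² - |⟪a, x⟫|²)`. -/

open scoped InnerProductSpace ComplexConjugate

section RankOneProjection

variable {𝕜 E : Type*} [RCLike 𝕜] [NormedAddCommGroup E] [InnerProductSpace 𝕜 E]

theorem norm_sub_inner_smul_sq {a : E} (ha : ‖a‖ = 1) (x : E) :
    ‖x - ⟪a, x⟫_𝕜 • a‖ ^ 2 = ‖x‖ ^ 2 - ‖⟪a, x⟫_𝕜‖ ^ 2 := by
  rw [@norm_sub_sq 𝕜, inner_smul_right, ← inner_conj_symm, RCLike.conj_mul, norm_smul, ha,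
    RCLike.norm_conj]
  norm_cast
  ring

theorem norm_inner_sub_conj_mul_inner_sq_le {a b : E} (ha : ‖a‖ = 1) (hb : ‖b‖ = 1) (x : E) :
    ‖⟪b, x⟫_𝕜 - conj ⟪a, b⟫_𝕜 * ⟪a, x⟫_𝕜‖ ^ 2
      ≤ (1 - ‖⟪a, b⟫_𝕜‖ ^ 2) * (‖x‖ ^ 2 - ‖⟪a, x⟫_𝕜‖ ^ 2) := by
  have hf : ⟪b - ⟪a, b⟫_𝕜 • a, x - ⟪a, x⟫_𝕜 • a⟫_𝕜 = ⟪b, x⟫_𝕜 - conj ⟪a, b⟫_𝕜 * ⟪a, x⟫_𝕜 := by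
    simp only [inner_sub_left, inner_sub_right, inner_smul_left, inner_smul_right,
      inner_self_eq_norm_sq_to_K, ha, ← inner_conj_symm a b]
    simp
  calc ‖⟪b, x⟫_𝕜 - conj ⟪a, b⟫_𝕜 * ⟪a, x⟫_𝕜‖ ^ 2
      = ‖⟪b - ⟪a, b⟫_𝕜 • a, x - ⟪a, x⟫_𝕜 • a⟫_𝕜‖ ^ 2 := by rw [hf]
    _ ≤ (‖b - ⟪a, b⟫_𝕜 • a‖ * ‖x - ⟪a, x⟫_𝕜 • a‖) ^ 2 := by
      gcongr; exact norm_inner_le_norm _ _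
    _ = (1 - ‖⟪a, b⟫_𝕜‖ ^ 2) * (‖x‖ ^ 2 - ‖⟪a, x⟫_𝕜‖ ^ 2) := by
      rw [mul_pow, norm_sub_inner_smul_sq ha, norm_sub_inner_smul_sq ha, hb, one_pow]

theorem norm_smul_sub_smul_sq {a b : E} (ha : ‖a‖ = 1) (hb : ‖b‖ = 1) (α β : 𝕜) :
    ‖α • a - β • b‖ ^ 2
      = (1 - ‖⟪a, b⟫_𝕜‖ ^ 2) * ‖α‖ ^ 2 + ‖β - conj ⟪a, b⟫_𝕜 * α‖ ^ 2 := by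
  rw [@norm_sub_sq 𝕜, inner_smul_left, inner_smul_right, norm_smul, norm_smul, ha, hb]
  simp only [RCLike.norm_sq_eq_def, RCLike.mul_re, RCLike.mul_im, map_sub,
    RCLike.conj_re, RCLike.conj_im, mul_one]
  ring

end RankOneProjection

theorem norm_sub_rank_one_projections
    {H : Type*} [NormedAddCommGroup H] [InnerProductSpace ℂ H]
    (a b : H) (ha : ‖a‖ = 1) (hb : ‖b‖ = 1) :
    ‖(innerSL ℂ a).smulRight a - (innerSL ℂ b).smulRight b‖
      = Real.sqrt (1 - ‖(inner ℂ a b : ℂ)‖ ^ 2) := by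
  set T := (innerSL ℂ a).smulRight a - (innerSL ℂ b).smulRight b
  have hT (x : H) : T x = ⟪a, x⟫_ℂ • a - ⟪b, x⟫_ℂ • b := by simp [T]
  have hTa : ‖T a‖ = Real.sqrt (1 - ‖⟪a, b⟫_ℂ‖ ^ 2) := by
    have : T a = a - ⟪b, a⟫_ℂ • b := by simp [hT, inner_self_eq_norm_sq_to_K, ha]
    rw [this, ← Real.sqrt_sq (norm_nonneg _), norm_sub_inner_smul_sq hb, ha, norm_inner_symm,
      one_pow]
  refine le_antisymm (T.opNorm_le_bound (Real.sqrt_nonneg _) fun x ↦ ?_)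
    (hTa ▸ T.unit_le_opNorm a ha.le)
  calc ‖T x‖ = Real.sqrt (‖T x‖ ^ 2) := (Real.sqrt_sq (norm_nonneg _)).symm
    _ ≤ Real.sqrt ((1 - ‖⟪a, b⟫_ℂ‖ ^ 2) * ‖x‖ ^ 2) := by
      gcongr
      rw [hT, norm_smul_sub_smul_sq ha hb]
      linarith [norm_inner_sub_conj_mul_inner_sq_le (𝕜 := ℂ) ha hb x]
    _ = Real.sqrt (1 - ‖⟪a, b⟫_ℂ‖ ^ 2) * ‖x‖ := by
      rw [Real.sqrt_mul' _ (sq_nonneg _), Real.sqrt_sq (norm_nonneg x)]
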